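/- Let g, h be Leibniz algebras and L the DGLA of h-valued cochains on g⊕h vanishing on C(h,h). For linear maps l : g → gl(h), r : g → gl(h), ω : g⊗g → h, viewed as the element c = ω + l + r ∈ L₁, the bracket [x+α, y+β] = [x,y]_g + ω(x,y) + l_xβ + r_yα + [α,β]_h makes g⊕h a Leibniz algebra if and only if c is a Maurer–Cartan element of L, i.e. ∂̄c + ½[c,c]_C = 0. Moreover, two Maurer–Cartan elements c = ω+l+r and c′ = ω′+l′+r′ are gauge equivalent via φ ∈ L₀ = Hom(g,h), meaning c′ = c + [c,φ]_C + ∂̄φ + ½[∂̄φ,φ]_C, if and only if the corresponding 2-cocycles (l,r,ω) and (l′,r′,ω′) are equivalent via φ (i.e. l′_x − l_x = ad^L_{φ(x)}, r′_x − r_x = ad^R_{φ(x)}, ω′(x,y) − ω(x,y) = l_xφ(y) + r_yφ(x) + [φ(x),φ(y)]_h − φ([x,y]_g)). -/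

import Mathlib

/-- A `(k,q)`-unshuffle: a permutation of `Fin (k+q)` that is increasing on
the first `k` positions and on the last `q` positions. -/
def IsUnshuffle (k q : ℕ) (σ : Equiv.Perm (Fin (k + q))) : Prop :=
  (∀ i j : Fin (k + q), i < j → (j : ℕ) < k → σ i < σ j) ∧
  (∀ i j : Fin (k + q), i < j → k ≤ (i : ℕ) → σ i < σ j)

instance (k q : ℕ) (σ : Equiv.Perm (Fin (k + q))) :
    Decidable (IsUnshuffle k q σ) := by
  unfold IsUnshuffle; infer_instance

/-- The Balavoine composition `P ∘ Q` of Leibniz-algebra cochains. -/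
def cochainComp {A : Type*} [AddCommGroup A] (p q : ℕ)
    (P : (Fin (p + 1) → A) → A) (Q : (Fin (q + 1) → A) → A) :
    (Fin (p + q + 1) → A) → A := fun x =>
  ∑ k : Fin (p + 1), ∑ σ ∈ Finset.univ.filter (IsUnshuffle (k : ℕ) q),
    ((-1 : ℤ) ^ ((k : ℕ) * q) * (Equiv.Perm.sign σ : ℤ)) •
      P (fun jj : Fin (p + 1) =>
        if h1 : (jj : ℕ) < (k : ℕ) then
          x (Fin.castLE (by have := k.isLt; omega)
              (σ ⟨(jj : ℕ), by omega⟩))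
        else if (jj : ℕ) = (k : ℕ) then
          Q (fun i : Fin (q + 1) =>
            if h3 : (i : ℕ) < q then
              x (Fin.castLE (by have := k.isLt; omega)
                  (σ ⟨(k : ℕ) + (i : ℕ), by omega⟩))
            else x ⟨(k : ℕ) + q, by have := k.isLt; omega⟩)
        else x ⟨(jj : ℕ) + q, by have := jj.isLt; omega⟩)

/-- The graded commutator bracket `[P,Q]_C = P∘Q + (-1)^{pq+1} Q∘P`. -/
def cochainBracket {A : Type*} [AddCommGroup A] (p q : ℕ)
    (P : (Fin (p + 1) → A) → A) (Q : (Fin (q + 1) → A) → A) :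
    (Fin (p + q + 1) → A) → A := fun x =>
  cochainComp p q P Q x +
    ((-1 : ℤ) ^ (p * q + 1)) •
      cochainComp q p Q P (fun i => x (Fin.cast (by omega) i))

/-- The differential `∂̄ = [μ, ·]_C`. -/
def deltaBar {A : Type*} [AddCommGroup A] (p : ℕ)
    (μ : (Fin 2 → A) → A) (P : (Fin (p + 1) → A) → A) :
    (Fin (p + 1 + 1) → A) → A := fun x =>
  cochainBracket 1 p μ P (fun i => x (Fin.cast (by omega) i))

variable {K : Type*} [Field K]
  {g : Type*} [AddCommGroup g] [Module K g]
  {h : Type*} [AddCommGroup h] [Module K h]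

/-- The 1-cochain `μ_g + μ_h` on the direct sum Leibniz algebra `g ⊕ h`. -/
def muSum (Bg : g →ₗ[K] g →ₗ[K] g) (Bh : h →ₗ[K] h →ₗ[K] h) :
    (Fin 2 → g × h) → g × h := fun x =>
  (Bg (x 0).1 (x 1).1, Bh (x 0).2 (x 1).2)

/-- The element `c = ω + l + r ∈ L₁` determined by linear maps
`l, r : g → gl(h)` and `ω : g ⊗ g → h`, via `l(x,α) = l_x α`, `r(α,x) = r_x α`. -/
def cochainOf (l r : g →ₗ[K] Module.End K h) (ω : g →ₗ[K] g →ₗ[K] h) :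
    (Fin 2 → g × h) → g × h := fun x =>
  (0, ω (x 0).1 (x 1).1 + l (x 0).1 (x 1).2 + r (x 1).1 (x 0).2)

/-- A degree-0 element `φ ∈ L₀ = Hom(g,h)` viewed as a 0-cochain on `g ⊕ h`. -/
def cochainOf0 (φ : g →ₗ[K] h) : (Fin 1 → g × h) → g × h := fun x =>
  (0, φ (x 0).1)

/-- The extension bracket on `g ⊕ h` determined by `(l, r, ω)`. -/
def extBracket (Bg : g →ₗ[K] g →ₗ[K] g) (Bh : h →ₗ[K] h →ₗ[K] h)
    (l r : g →ₗ[K] Module.End K h) (ω : g →ₗ[K] g →ₗ[K] h)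
    (u v : g × h) : g × h :=
  (Bg u.1 v.1, ω u.1 v.1 + l u.1 v.2 + r v.1 u.2 + Bh u.2 v.2)


/-! The extension bracket is `μ + c`, where `μ = μ_g + μ_h`. Its Leibnizator is therefore
`Jac(μ) + [μ, c]_C + ½[c, c]_C = Jac(μ) + ∂̄c + ½[c, c]_C`, and `Jac(μ) = 0` because `g`
and `h` are Leibniz algebras; so the Leibniz identity is exactly the Maurer–Cartan equation.

For the gauge action, evaluating `c + [c, φ]_C + ∂̄φ + ½[∂̄φ, φ]_C` shows that it is again a
cochain of the form `ω^φ + l^φ + r^φ`, with `l^φ = l + ad^L ∘ φ`, `r^φ = r + ad^R ∘ φ` and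
`ω^φ - ω` the expression of the cocycle equivalence. A cochain of the form `ω + l + r`
determines `l`, `r` and `ω` (evaluate it on `(x, α)`, `(α, x)` and `(x, y)`), which gives the
second equivalence. -/
open Finset

lemma apply_eq_apply_vecCons_one {A B : Type*} (P : (Fin 1 → A) → B) {f : Fin 1 → A} {a : A}
    (h₀ : f 0 = a) : P f = P ![a] :=
  congrArg P (funext (Fin.forall_fin_one.2 h₀))

lemma apply_eq_apply_vecCons_two {A B : Type*} (P : (Fin 2 → A) → B) {f : Fin 2 → A} {a b : A}
    (h₀ : f 0 = a) (h₁ : f 1 = b) : P f = P ![a, b] :=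
  congrArg P (funext (Fin.forall_fin_two.2 ⟨h₀, h₁⟩))

section LowDegreeCochains

variable {A : Type*} [AddCommGroup A]

lemma cochainComp_one_one_apply (P Q : (Fin 2 → A) → A) (x : Fin 3 → A) :
    cochainComp 1 1 P Q x =
      P ![Q ![x 0, x 1], x 2] - P ![x 0, Q ![x 1, x 2]] + P ![x 1, Q ![x 0, x 2]] := by
  have unshuffles₀ : univ.filter (IsUnshuffle 0 1) = {1} := by decide
  have unshuffles₁ : univ.filter (IsUnshuffle 1 1) = {1, Equiv.swap 0 1} := by decide
  rw [cochainComp, Fin.sum_univ_two]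
  -- `dsimp`, not `rw`: the index `k` also occurs in the type `Perm (Fin (k + 1))` of the terms
  dsimp only [Fin.val_zero, Fin.val_one, Fin.isValue]
  rw [unshuffles₀, unshuffles₁, sum_singleton, sum_pair (by decide)]
  simp only [Equiv.Perm.sign_one, Equiv.Perm.sign_swap', if_neg (show (0 : Fin 2) ≠ 1 by decide),
    Units.val_one, Units.val_neg, mul_one, mul_neg, pow_one, pow_zero, one_zsmul, neg_one_zsmul,
    neg_neg]
  conv_rhs => rw [sub_eq_add_neg, add_assoc]
  exact congrArg₂ (· + ·)
    (apply_eq_apply_vecCons_two P (apply_eq_apply_vecCons_two Q rfl rfl) rfl)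
    (congrArg₂ (· + ·)
      (congrArg Neg.neg
        (apply_eq_apply_vecCons_two P rfl (apply_eq_apply_vecCons_two Q rfl rfl)))
      (apply_eq_apply_vecCons_two P rfl (apply_eq_apply_vecCons_two Q rfl rfl)))

lemma cochainComp_one_zero_apply (P : (Fin 2 → A) → A) (Q : (Fin 1 → A) → A)
    (x : Fin 2 → A) :
    cochainComp 1 0 P Q x = P ![Q ![x 0], x 1] + P ![x 0, Q ![x 1]] := by
  have unshuffles₀ : univ.filter (IsUnshuffle 0 0) = {1} := by decide
  have unshuffles₁ : univ.filter (IsUnshuffle 1 0) = {1} := by decide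
  rw [cochainComp, Fin.sum_univ_two]
  dsimp only [Fin.val_zero, Fin.val_one, Fin.isValue]
  rw [unshuffles₀, unshuffles₁, sum_singleton, sum_singleton]
  simp only [Equiv.Perm.sign_one, Units.val_one, mul_one, mul_zero, pow_zero, one_zsmul]
  exact congrArg₂ (· + ·)
    (apply_eq_apply_vecCons_two P (apply_eq_apply_vecCons_one Q rfl) rfl)
    (apply_eq_apply_vecCons_two P rfl (apply_eq_apply_vecCons_one Q rfl))

lemma cochainComp_zero_one_apply (P : (Fin 1 → A) → A) (Q : (Fin 2 → A) → A)
    (x : Fin 2 → A) :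
    cochainComp 0 1 P Q x = P ![Q ![x 0, x 1]] := by
  have unshuffles₀ : univ.filter (IsUnshuffle 0 1) = {1} := by decide
  rw [cochainComp, Fin.sum_univ_one]
  dsimp only [Fin.val_zero, Fin.isValue]
  rw [unshuffles₀, sum_singleton]
  simp only [Equiv.Perm.sign_one, Units.val_one, mul_one, pow_zero, one_zsmul]
  exact apply_eq_apply_vecCons_one P (apply_eq_apply_vecCons_two Q rfl rfl)

lemma cochainBracket_one_one_apply (P Q : (Fin 2 → A) → A) (x : Fin 3 → A) :
    cochainBracket 1 1 P Q x =
      (P ![Q ![x 0, x 1], x 2] - P ![x 0, Q ![x 1, x 2]] + P ![x 1, Q ![x 0, x 2]]) +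
      (Q ![P ![x 0, x 1], x 2] - Q ![x 0, P ![x 1, x 2]] + Q ![x 1, P ![x 0, x 2]]) := by
  rw [cochainBracket, cochainComp_one_one_apply, cochainComp_one_one_apply]
  norm_num

lemma cochainBracket_one_zero_apply (P : (Fin 2 → A) → A) (Q : (Fin 1 → A) → A)
    (x : Fin 2 → A) :
    cochainBracket 1 0 P Q x = P ![Q ![x 0], x 1] + P ![x 0, Q ![x 1]] - Q ![P ![x 0, x 1]] := by
  rw [cochainBracket, cochainComp_one_zero_apply, cochainComp_zero_one_apply]
  norm_num [sub_eq_add_neg]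

lemma deltaBar_one_apply (μ P : (Fin 2 → A) → A) (x : Fin 3 → A) :
    deltaBar 1 μ P x =
      (μ ![P ![x 0, x 1], x 2] - μ ![x 0, P ![x 1, x 2]] + μ ![x 1, P ![x 0, x 2]]) +
      (P ![μ ![x 0, x 1], x 2] - P ![x 0, μ ![x 1, x 2]] + P ![x 1, μ ![x 0, x 2]]) :=
  cochainBracket_one_one_apply μ P _

lemma deltaBar_zero_apply (μ : (Fin 2 → A) → A) (P : (Fin 1 → A) → A) (x : Fin 2 → A) :
    deltaBar 0 μ P x = μ ![P ![x 0], x 1] + μ ![x 0, P ![x 1]] - P ![μ ![x 0, x 1]] :=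
  cochainBracket_one_zero_apply μ P _

end LowDegreeCochains

lemma half_smul_add_self [NeZero (2 : K)] {M : Type*} [AddCommGroup M] [Module K M] (a : M) :
    (1 / 2 : K) • (a + a) = a := by
  rw [← two_smul K a, smul_smul, one_div, inv_mul_cancel₀ two_ne_zero, one_smul]

lemma cochainOf_eq_cochainOf_iff {l r l' r' : g →ₗ[K] Module.End K h}
    {ω ω' : g →ₗ[K] g →ₗ[K] h} :
    (∀ x : Fin 2 → g × h, cochainOf l r ω x = cochainOf l' r' ω' x) ↔
      l = l' ∧ r = r' ∧ ω = ω' := by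
  refine ⟨fun hc => ⟨?_, ?_, ?_⟩, ?_⟩
  · ext a α
    simpa [cochainOf] using hc ![(a, 0), (0, α)]
  · ext a α
    simpa [cochainOf] using hc ![(0, α), (a, 0)]
  · ext a b
    simpa [cochainOf] using hc ![(a, 0), (b, 0)]
  · rintro ⟨rfl, rfl, rfl⟩ x
    rfl

lemma deltaBar_add_half_bracket_cochainOf [NeZero (2 : K)]
    {Bg : g →ₗ[K] g →ₗ[K] g}
    (hg : ∀ x y z : g, Bg x (Bg y z) = Bg (Bg x y) z + Bg y (Bg x z))
    {Bh : h →ₗ[K] h →ₗ[K] h}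
    (hh : ∀ a b c : h, Bh a (Bh b c) = Bh (Bh a b) c + Bh b (Bh a c))
    (l r : g →ₗ[K] Module.End K h) (ω : g →ₗ[K] g →ₗ[K] h) (x : Fin 3 → g × h) :
    deltaBar 1 (muSum Bg Bh) (cochainOf l r ω) x +
        (1 / 2 : K) • cochainBracket 1 1 (cochainOf l r ω) (cochainOf l r ω) x =
      extBracket Bg Bh l r ω (extBracket Bg Bh l r ω (x 0) (x 1)) (x 2) +
        extBracket Bg Bh l r ω (x 1) (extBracket Bg Bh l r ω (x 0) (x 2)) -
        extBracket Bg Bh l r ω (x 0) (extBracket Bg Bh l r ω (x 1) (x 2)) := by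
  rw [deltaBar_one_apply, cochainBracket_one_one_apply, half_smul_add_self]
  simp only [muSum, cochainOf, extBracket, Matrix.cons_val_zero, Matrix.cons_val_one,
    map_add, map_zero, LinearMap.add_apply, LinearMap.zero_apply, Prod.mk_add_mk,
    Prod.mk_sub_mk, Prod.mk.injEq]
  constructor
  · rw [hg (x 0).1 (x 1).1 (x 2).1]
    abel
  · rw [hh (x 0).2 (x 1).2 (x 2).2]
    abel

lemma gaugeAction_cochainOf_apply [NeZero (2 : K)]
    (Bg : g →ₗ[K] g →ₗ[K] g) (Bh : h →ₗ[K] h →ₗ[K] h)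
    (l r : g →ₗ[K] Module.End K h) (ω : g →ₗ[K] g →ₗ[K] h) (φ : g →ₗ[K] h)
    (x : Fin 2 → g × h) :
    cochainOf l r ω x +
        cochainBracket 1 0 (cochainOf l r ω) (cochainOf0 φ) x +
        deltaBar 0 (muSum Bg Bh) (cochainOf0 φ) x +
        (1 / 2 : K) • cochainBracket 1 0
          (deltaBar 0 (muSum Bg Bh) (cochainOf0 φ)) (cochainOf0 φ) x =
      cochainOf (l + Bh ∘ₗ φ) (r + Bh.flip ∘ₗ φ)
        (ω + (l.compl₂ φ + (r.compl₂ φ).flip + Bh.compl₁₂ φ φ - Bg.compr₂ φ)) x := by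
  rw [cochainBracket_one_zero_apply, cochainBracket_one_zero_apply, deltaBar_zero_apply,
    deltaBar_zero_apply, deltaBar_zero_apply, deltaBar_zero_apply]
  simp only [muSum, cochainOf, cochainOf0, Matrix.cons_val_zero, Matrix.cons_val_one,
    Matrix.cons_val_fin_one, map_zero, LinearMap.add_apply, LinearMap.sub_apply,
    LinearMap.zero_apply, LinearMap.comp_apply, LinearMap.flip_apply,
    LinearMap.compl₂_apply, LinearMap.compr₂_apply, LinearMap.compl₁₂_apply,
    Prod.mk_add_mk, Prod.mk_sub_mk, Prod.smul_mk, add_zero, zero_add, sub_zero, smul_zero,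
    Prod.mk.injEq, true_and]
  rw [half_smul_add_self]
  abel

/-- Proposition 4.5 and Theorem 4.7: `(g⊕h, [·,·]_{(l,r,ω)})` is a Leibniz
algebra iff `c = ω + l + r` is a Maurer–Cartan element of the DGLA `L`
(`∂̄c + ½[c,c]_C = 0`); and two Maurer–Cartan elements `c, c'` are gauge
equivalent via `φ ∈ L₀` (`c' = c + [c,φ]_C + ∂̄φ + ½[∂̄φ,φ]_C`) iff the
corresponding non-abelian 2-cocycles are equivalent via `φ`. -/
theorem MC_correspondence
    (Bg : g →ₗ[K] g →ₗ[K] g)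
    (hg : ∀ x y z : g, Bg x (Bg y z) = Bg (Bg x y) z + Bg y (Bg x z))
    (Bh : h →ₗ[K] h →ₗ[K] h)
    (hh : ∀ a b c : h, Bh a (Bh b c) = Bh (Bh a b) c + Bh b (Bh a c))
    [CharZero K] :
    -- Proposition 4.5: Leibniz iff Maurer–Cartan
    (∀ (l r : g →ₗ[K] Module.End K h) (ω : g →ₗ[K] g →ₗ[K] h),
      (∀ u v w : g × h,
        extBracket Bg Bh l r ω u (extBracket Bg Bh l r ω v w) =
          extBracket Bg Bh l r ω (extBracket Bg Bh l r ω u v) w +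
            extBracket Bg Bh l r ω v (extBracket Bg Bh l r ω u w))
      ↔
      (∀ x : Fin 3 → g × h,
        deltaBar 1 (muSum Bg Bh) (cochainOf l r ω) x +
          (1 / 2 : K) •
            cochainBracket 1 1 (cochainOf l r ω) (cochainOf l r ω) x = 0)) ∧
    -- Theorem 4.7: gauge equivalence iff cocycle equivalence
    (∀ (l r l' r' : g →ₗ[K] Module.End K h) (ω ω' : g →ₗ[K] g →ₗ[K] h)
        (φ : g →ₗ[K] h),
      (∀ x : Fin 3 → g × h,
        deltaBar 1 (muSum Bg Bh) (cochainOf l r ω) x +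
          (1 / 2 : K) •
            cochainBracket 1 1 (cochainOf l r ω) (cochainOf l r ω) x = 0) →
      (∀ x : Fin 3 → g × h,
        deltaBar 1 (muSum Bg Bh) (cochainOf l' r' ω') x +
          (1 / 2 : K) •
            cochainBracket 1 1 (cochainOf l' r' ω') (cochainOf l' r' ω') x
              = 0) →
      ((∀ x : Fin 2 → g × h,
          cochainOf l' r' ω' x =
            cochainOf l r ω x +
              cochainBracket 1 0 (cochainOf l r ω) (cochainOf0 φ) x +
              deltaBar 0 (muSum Bg Bh) (cochainOf0 φ) x +
              (1 / 2 : K) •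
                cochainBracket 1 0
                  (deltaBar 0 (muSum Bg Bh) (cochainOf0 φ)) (cochainOf0 φ) x)
        ↔
        ((∀ (x : g) (α : h), l' x α - l x α = Bh (φ x) α) ∧
         (∀ (x : g) (α : h), r' x α - r x α = Bh α (φ x)) ∧
         (∀ x y : g, ω' x y - ω x y =
            l x (φ y) + r y (φ x) + Bh (φ x) (φ y) - φ (Bg x y))))) := by
  refine ⟨fun l r ω => ?_, fun l r l' r' ω ω' φ _ _ => ?_⟩
  · simp only [deltaBar_add_half_bracket_cochainOf hg hh, sub_eq_zero]
    exact ⟨fun hL x => (hL (x 0) (x 1) (x 2)).symm,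
      fun hMC u v w => (hMC ![u, v, w]).symm⟩
  · simp only [gaugeAction_cochainOf_apply, cochainOf_eq_cochainOf_iff, LinearMap.ext_iff,
      LinearMap.add_apply, LinearMap.sub_apply, LinearMap.comp_apply, LinearMap.flip_apply,
      LinearMap.compl₂_apply, LinearMap.compr₂_apply, LinearMap.compl₁₂_apply,
      sub_eq_iff_eq_add']
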